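/- For every g ∈ K^×, the K-algebra automorphism of K[t]/(t^{p^n}) determined by t ↦ g·t is an isomorphism of K-Hopf algebras from H_{n,r,f·g^{1-p^{r+1}}} to H_{n,r,f}; in particular H_{n,r,f} and H_{n,r,f·g^{1-p^{r+1}}} are the same K-Hopf algebra up to a change of algebra generator. -/

import Mathlib

open Polynomial TensorProduct

noncomputable section

/-- The truncated polynomial algebra `K[t]/(t^{p^n})`, underlying the Hopf algebra
`H_{n,r,f}`. -/
abbrev TruncAlg (K : Type) [Field K] (p n : ℕ) : Type :=
  AdjoinRoot (X ^ p ^ n : K[X])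

/-- `t`, the image of `X` in `K[t]/(t^{p^n})`. -/
def tgen (K : Type) [Field K] (p n : ℕ) : TruncAlg K p n :=
  AdjoinRoot.root _

/-- The basis `1, t, t^2, …, t^{p^n-1}` of `K[t]/(t^{p^n})`. -/
def tbasis (K : Type) [Field K] (p n : ℕ) :
    Module.Basis (Fin (p ^ n)) K (TruncAlg K p n) :=
  (AdjoinRoot.powerBasis (f := (X ^ p ^ n : K[X]))
    (pow_ne_zero _ Polynomial.X_ne_zero)).basis.reindex
    (finCongr (by simp))

/-- The dual basis functional `z_j ∈ H = H_{n,r,f}^*`, with `z_j (t^i) = δ_{ij}`;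
junk value `0` out of range. -/
def zdual (K : Type) [Field K] (p n : ℕ) (j : ℕ) :
    Module.Dual K (TruncAlg K p n) :=
  if h : j < p ^ n then (tbasis K p n).coord ⟨j, h⟩ else 0

/-- The coefficient `1/(ℓ!(p-ℓ)!)`, computed in the prime field of `K`. -/
def pfCoeff (K : Type) [Field K] (p ℓ : ℕ) : K :=
  ((ℓ.factorial * (p - ℓ).factorial : ℕ) : K)⁻¹

/-- The element `Δ(t) = t⊗1 + 1⊗t + f Σ_{ℓ=1}^{p-1} (1/(ℓ!(p-ℓ)!)) t^{p^r ℓ} ⊗ t^{p^r (p-ℓ)}`. -/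
def Delta_t (K : Type) [Field K] (p n r : ℕ) (f : K) :
    TruncAlg K p n ⊗[K] TruncAlg K p n :=
  tgen K p n ⊗ₜ 1 + 1 ⊗ₜ tgen K p n +
    f • ∑ ℓ ∈ Finset.Icc 1 (p - 1),
      pfCoeff K p ℓ • ((tgen K p n ^ (p ^ r * ℓ)) ⊗ₜ[K] (tgen K p n ^ (p ^ r * (p - ℓ))))

/-- The comultiplication of `H_{n,r,f}` as a linear map, determined by `Δ(t^i) = Δ(t)^i`
(it is the unique `K`-algebra map with `t ↦ Δ(t)`). -/
def DeltaMap (K : Type) [Field K] (p n r : ℕ) (f : K) :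
    TruncAlg K p n →ₗ[K] TruncAlg K p n ⊗[K] TruncAlg K p n :=
  (tbasis K p n).constr K fun i => (Delta_t K p n r f) ^ (i : ℕ)

/-- Convolution product on `H = (H_{n,r,f})^*`:  `(z * z')(h) = mult ((z ⊗ z')(Δ h))`. -/
def conv (K : Type) [Field K] (p n r : ℕ) (f : K)
    (z z' : Module.Dual K (TruncAlg K p n)) : Module.Dual K (TruncAlg K p n) :=
  (LinearMap.mul' K K) ∘ₗ (TensorProduct.map z z') ∘ₗ DeltaMap K p n r f

/-- Convolution powers; the 0th power is the unit `z_0 = ε` of `H`. -/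
def convPow (K : Type) [Field K] (p n r : ℕ) (f : K)
    (z : Module.Dual K (TruncAlg K p n)) : ℕ → Module.Dual K (TruncAlg K p n)
  | 0 => zdual K p n 0
  | m + 1 => conv K p n r f (convPow K p n r f z m) z

/-- The convolution product `z_1^{j 0} · z_p^{j 1} ⋯ z_{p^{m-1}}^{j (m-1)}` in `H`. -/
def zprod (K : Type) [Field K] (p n r : ℕ) (f : K)
    (j : ℕ → ℕ) : ℕ → Module.Dual K (TruncAlg K p n)
  | 0 => zdual K p n 0
  | m + 1 => conv K p n r f (zprod K p n r f j m)
      (convPow K p n r f (zdual K p n (p ^ m)) (j m))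


/-- The `K`-algebra endomorphism of `K[t]/(t^{p^n})` determined by `t ↦ g·t`. -/
def scaleHom (K : Type) [Field K] (p n : ℕ) (g : K) :
    TruncAlg K p n →ₐ[K] TruncAlg K p n :=
  AdjoinRoot.liftAlgHom _ (Algebra.ofId K (TruncAlg K p n)) (algebraMap K (TruncAlg K p n) g * tgen K p n) (by
    have h0 : (AdjoinRoot.root (X ^ p ^ n : K[X])) ^ (p ^ n) = 0 := by
      rw [← AdjoinRoot.mk_X, ← map_pow, AdjoinRoot.mk_self]
    simp [tgen, map_pow, Polynomial.aeval_X, Polynomial.eval₂_X_pow, mul_pow, h0])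

/-- The antipode of `H_{n,r,f}`, the algebra map determined by `t ↦ -t`
(as a linear map, `t^i ↦ (-t)^i`); it is the same for all `f`. -/
def antip (K : Type) [Field K] (p n : ℕ) : TruncAlg K p n →ₗ[K] TruncAlg K p n :=
  (tbasis K p n).constr K fun i => (-(tgen K p n)) ^ (i : ℕ)


/-! The comultiplication, the antipode and the counit are each the linear map `t^i ↦ x^i` for
some `x` (namely `Δ(t)`, `-t` and `0`), and precomposing such a map with `t ↦ g t` replaces `x`
by `g • x`. Since `t ⊗ 1 + 1 ⊗ t` is homogeneous of degree `1` and the sum in `Δ(t)` of degree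
`p^{r+1}`, applying `t ↦ g t` on both tensor factors sends `Δ_{f g^{1-p^{r+1}}}(t)` to
`g • Δ_f(t)`, which is exactly the compatibility of comultiplications. -/

section Scaling

variable (K : Type) [Field K] (p n : ℕ)

def powConstr {A : Type} [Semiring A] [Algebra K A] (x : A) : TruncAlg K p n →ₗ[K] A :=
  (tbasis K p n).constr K fun i => x ^ (i : ℕ)

lemma tbasis_apply (i : Fin (p ^ n)) : tbasis K p n i = tgen K p n ^ (i : ℕ) := by
  rw [tbasis, Module.Basis.reindex_apply, PowerBasis.basis_eq_pow]
  simp [tgen, AdjoinRoot.powerBasis_gen]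

lemma powConstr_tbasis {A : Type} [Semiring A] [Algebra K A] (x : A) (i : Fin (p ^ n)) :
    powConstr K p n x (tbasis K p n i) = x ^ (i : ℕ) :=
  Module.Basis.constr_basis _ _ _ _

lemma AlgHom.comp_powConstr {A B : Type} [Semiring A] [Algebra K A] [Semiring B] [Algebra K B]
    (ψ : A →ₐ[K] B) (x : A) :
    ψ.toLinearMap ∘ₗ powConstr K p n x = powConstr K p n (ψ x) :=
  (tbasis K p n).ext fun i => by simp [powConstr_tbasis]

lemma zdual_zero_eq_powConstr : zdual K p n 0 = powConstr K p n (0 : K) := by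
  refine (tbasis K p n).ext fun i => ?_
  rw [powConstr_tbasis, zdual, dif_pos (Nat.zero_lt_of_lt i.2), Module.Basis.coord_apply,
    Module.Basis.repr_self, Finsupp.single_apply, zero_pow_eq]
  simp only [Fin.ext_iff]

variable {K p n}

lemma scaleHom_tgen (g : K) : scaleHom K p n g (tgen K p n) = algebraMap K _ g * tgen K p n :=
  AdjoinRoot.liftAlgHom_root _ _ _ _

lemma scaleHom_tgen_pow (g : K) (m : ℕ) :
    scaleHom K p n g (tgen K p n ^ m) = g ^ m • tgen K p n ^ m := by
  rw [map_pow, scaleHom_tgen, ← Algebra.smul_def, _root_.smul_pow]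

lemma scaleHom_comp (a b : K) :
    (scaleHom K p n a).comp (scaleHom K p n b) = scaleHom K p n (a * b) := by
  refine AdjoinRoot.algHom_ext ?_
  change scaleHom K p n a (scaleHom K p n b (tgen K p n)) = scaleHom K p n (a * b) (tgen K p n)
  rw [scaleHom_tgen, map_mul, scaleHom_tgen, AlgHom.commutes, ← mul_assoc, ← map_mul,
    scaleHom_tgen, mul_comm b a]

lemma scaleHom_one : scaleHom K p n 1 = AlgHom.id K _ := by
  refine AdjoinRoot.algHom_ext ?_
  change scaleHom K p n 1 (tgen K p n) = tgen K p n
  rw [scaleHom_tgen, map_one, one_mul]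

lemma scaleHom_bijective {g : K} (hg : g ≠ 0) : Function.Bijective (scaleHom K p n g) := by
  refine Function.bijective_iff_has_inverse.mpr ⟨scaleHom K p n g⁻¹, fun a => ?_, fun a => ?_⟩
  · rw [← AlgHom.comp_apply, scaleHom_comp, inv_mul_cancel₀ hg, scaleHom_one, AlgHom.id_apply]
  · rw [← AlgHom.comp_apply, scaleHom_comp, mul_inv_cancel₀ hg, scaleHom_one, AlgHom.id_apply]

lemma scaleHom_tbasis (g : K) (i : Fin (p ^ n)) :
    scaleHom K p n g (tbasis K p n i) = g ^ (i : ℕ) • tbasis K p n i := by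
  rw [tbasis_apply, scaleHom_tgen_pow]

lemma powConstr_comp_scaleHom {A : Type} [Semiring A] [Algebra K A] (x : A) (g : K) :
    powConstr K p n x ∘ₗ (scaleHom K p n g).toLinearMap = powConstr K p n (g • x) :=
  (tbasis K p n).ext fun i => by
    simp [scaleHom_tbasis, powConstr_tbasis, _root_.smul_pow]

lemma tensorMap_scaleHom_tmul_tgen_pow (g : K) (a b : ℕ) :
    Algebra.TensorProduct.map (scaleHom K p n g) (scaleHom K p n g)
        ((tgen K p n ^ a) ⊗ₜ[K] (tgen K p n ^ b))
      = g ^ (a + b) • ((tgen K p n ^ a) ⊗ₜ[K] (tgen K p n ^ b)) := by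
  rw [Algebra.TensorProduct.map_tmul, scaleHom_tgen_pow, scaleHom_tgen_pow, smul_tmul_smul,
    pow_add]

lemma tensorMap_scaleHom_Delta_t {g : K} (hg : g ≠ 0) (r : ℕ) (f : K) :
    Algebra.TensorProduct.map (scaleHom K p n g) (scaleHom K p n g)
        (Delta_t K p n r (f * g ^ ((1 : ℤ) - (p : ℤ) ^ (r + 1))))
      = g • Delta_t K p n r f := by
  have hleft := tensorMap_scaleHom_tmul_tgen_pow (p := p) (n := n) g 1 0
  have hright := tensorMap_scaleHom_tmul_tgen_pow (p := p) (n := n) g 0 1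
  simp only [pow_zero, pow_one, zero_add, add_zero] at hleft hright
  have hterm : ∀ ℓ ∈ Finset.Icc 1 (p - 1),
      Algebra.TensorProduct.map (scaleHom K p n g) (scaleHom K p n g)
          (pfCoeff K p ℓ • ((tgen K p n ^ (p ^ r * ℓ)) ⊗ₜ[K] (tgen K p n ^ (p ^ r * (p - ℓ)))))
        = g ^ p ^ (r + 1) •
          pfCoeff K p ℓ • ((tgen K p n ^ (p ^ r * ℓ)) ⊗ₜ[K] (tgen K p n ^ (p ^ r * (p - ℓ)))) := by
    intro ℓ hℓ
    have hℓp : ℓ ≤ p := (Finset.mem_Icc.mp hℓ).2.trans (Nat.sub_le p 1)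
    rw [map_smul, tensorMap_scaleHom_tmul_tgen_pow, ← mul_add, Nat.add_sub_cancel' hℓp,
      ← pow_succ, smul_comm]
  have hscalar : f * g ^ ((1 : ℤ) - (p : ℤ) ^ (r + 1)) * g ^ p ^ (r + 1) = g * f := by
    rw [mul_assoc, ← zpow_natCast, ← zpow_add₀ hg]
    push_cast
    rw [sub_add_cancel, zpow_one, mul_comm]
  rw [Delta_t, Delta_t, map_add, map_add, hleft, hright, map_smul, map_sum,
    Finset.sum_congr rfl hterm, ← Finset.smul_sum, smul_smul, hscalar, smul_add, smul_add, mul_smul]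

lemma DeltaMap_comp_scaleHom {g : K} (hg : g ≠ 0) (r : ℕ) (f : K) :
    DeltaMap K p n r f ∘ₗ (scaleHom K p n g).toLinearMap
      = TensorProduct.map (scaleHom K p n g).toLinearMap (scaleHom K p n g).toLinearMap
          ∘ₗ DeltaMap K p n r (f * g ^ ((1 : ℤ) - (p : ℤ) ^ (r + 1))) := by
  change powConstr K p n _ ∘ₗ _
    = (Algebra.TensorProduct.map (scaleHom K p n g) (scaleHom K p n g)).toLinearMap
        ∘ₗ powConstr K p n _
  rw [powConstr_comp_scaleHom, AlgHom.comp_powConstr, tensorMap_scaleHom_Delta_t hg]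

lemma zdual_zero_comp_scaleHom (g : K) :
    zdual K p n 0 ∘ₗ (scaleHom K p n g).toLinearMap = zdual K p n 0 := by
  rw [zdual_zero_eq_powConstr, powConstr_comp_scaleHom, smul_zero]

lemma scaleHom_comp_antip (g : K) :
    (scaleHom K p n g).toLinearMap ∘ₗ antip K p n
      = antip K p n ∘ₗ (scaleHom K p n g).toLinearMap := by
  change _ ∘ₗ powConstr K p n _ = powConstr K p n _ ∘ₗ _
  rw [AlgHom.comp_powConstr, powConstr_comp_scaleHom, map_neg, scaleHom_tgen, smul_neg,
    Algebra.smul_def]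

end Scaling

theorem scaleHom_isHopfIso_general
    (p : ℕ) (F : Type) [Field F]
    (n r : ℕ)
    (f : LaurentSeries F) (g : LaurentSeries F) (hg : g ≠ 0) :
    Function.Bijective (scaleHom (LaurentSeries F) p n g) ∧
    scaleHom (LaurentSeries F) p n g (tgen (LaurentSeries F) p n)
      = algebraMap (LaurentSeries F) _ g * tgen (LaurentSeries F) p n ∧
    (∀ a : TruncAlg (LaurentSeries F) p n,
      DeltaMap (LaurentSeries F) p n r f (scaleHom (LaurentSeries F) p n g a)
        = TensorProduct.map (scaleHom (LaurentSeries F) p n g).toLinearMap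
            (scaleHom (LaurentSeries F) p n g).toLinearMap
            (DeltaMap (LaurentSeries F) p n r (f * g ^ ((1 : ℤ) - (p : ℤ) ^ (r + 1))) a)) ∧
    (∀ a : TruncAlg (LaurentSeries F) p n,
      zdual (LaurentSeries F) p n 0 (scaleHom (LaurentSeries F) p n g a)
        = zdual (LaurentSeries F) p n 0 a) ∧
    (∀ a : TruncAlg (LaurentSeries F) p n,
      scaleHom (LaurentSeries F) p n g (antip (LaurentSeries F) p n a)
        = antip (LaurentSeries F) p n (scaleHom (LaurentSeries F) p n g a)) :=
  ⟨scaleHom_bijective hg, scaleHom_tgen g,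
    LinearMap.congr_fun (DeltaMap_comp_scaleHom hg r f),
    LinearMap.congr_fun (zdual_zero_comp_scaleHom g),
    LinearMap.congr_fun (scaleHom_comp_antip g)⟩

/-- For `g ∈ K^×`, the algebra automorphism of `K[t]/(t^{p^n})`
with `t ↦ g·t` is an isomorphism of `K`-Hopf algebras
`H_{n,r,f·g^{1-p^{r+1}}} → H_{n,r,f}`: it is bijective, sends `t` to `g·t`, and is
compatible with the comultiplications, the counit `ε = z_0`, and the antipode. -/
theorem scaleHom_isHopfIso
    (p : ℕ) [Fact p.Prime] (F : Type) [Field F] [Fintype F] [CharP F p]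
    (n r : ℕ) (hr : 0 < r) (hrn : r < n) (hn2r : n ≤ 2 * r)
    (f : LaurentSeries F) (hf : f ≠ 0) (g : LaurentSeries F) (hg : g ≠ 0) :
    Function.Bijective (scaleHom (LaurentSeries F) p n g) ∧
    scaleHom (LaurentSeries F) p n g (tgen (LaurentSeries F) p n)
      = algebraMap (LaurentSeries F) _ g * tgen (LaurentSeries F) p n ∧
    (∀ a : TruncAlg (LaurentSeries F) p n,
      DeltaMap (LaurentSeries F) p n r f (scaleHom (LaurentSeries F) p n g a)
        = TensorProduct.map (scaleHom (LaurentSeries F) p n g).toLinearMap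
            (scaleHom (LaurentSeries F) p n g).toLinearMap
            (DeltaMap (LaurentSeries F) p n r (f * g ^ ((1 : ℤ) - (p : ℤ) ^ (r + 1))) a)) ∧
    (∀ a : TruncAlg (LaurentSeries F) p n,
      zdual (LaurentSeries F) p n 0 (scaleHom (LaurentSeries F) p n g a)
        = zdual (LaurentSeries F) p n 0 a) ∧
    (∀ a : TruncAlg (LaurentSeries F) p n,
      scaleHom (LaurentSeries F) p n g (antip (LaurentSeries F) p n a)
        = antip (LaurentSeries F) p n (scaleHom (LaurentSeries F) p n g a)) :=
  scaleHom_isHopfIso_general p F n r f g hg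

end
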